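/- arXiv:2405.08004 — 3 statements merged into one kernel-verified Lean document; each statement's English description precedes it below -/
import Mathlib

section
/- If four points A_1, A_2, A_3, A_4 in ℝ³ are not all collinear, then the function f(P) = Σ_{i=1}^{4} dist(P, A_i) attains its minimum at a unique point of ℝ³. -/
/-- If four points in ℝ³ are not all collinear, then the sum of distances to
them attains its minimum at a unique point. -/
theorem stmt_1 (A : Fin 4 → EuclideanSpace ℝ (Fin 3))
    (hA : ¬ Collinear ℝ (Set.range A))
    (f : EuclideanSpace ℝ (Fin 3) → ℝ)
    (hf : ∀ P, f P = ∑ i : Fin 4, ‖P - A i‖) :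
    ∃! P₀, ∀ P, f P₀ ≤ f P := by
  have hcont : Continuous f := by
    have : f = fun P => ∑ i : Fin 4, ‖P - A i‖ := funext hf
    rw [this]
    exact continuous_finset_sum _ fun i _ => (continuous_id.sub continuous_const).norm
  set S := ∑ i : Fin 4, ‖A i‖ with hS
  have hS0 : 0 ≤ S := Finset.sum_nonneg fun i _ => norm_nonneg _
  have hf0 : 0 ≤ f 0 := by
    rw [hf]; exact Finset.sum_nonneg fun i _ => norm_nonneg _
  set K := Metric.closedBall (0 : EuclideanSpace ℝ (Fin 3)) (f 0 + S) with hK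
  have hKc : IsCompact K := isCompact_closedBall _ _
  have h0K : (0 : EuclideanSpace ℝ (Fin 3)) ∈ K := by
    simp only [hK, Metric.mem_closedBall, dist_self]
    positivity
  obtain ⟨P₀, hP₀K, hmin⟩ := hKc.exists_isMinOn ⟨0, h0K⟩ hcont.continuousOn
  have hglob : ∀ P, f P₀ ≤ f P := by
    intro P
    by_cases hP : P ∈ K
    · exact hmin hP
    · have hPn : f 0 + S < ‖P‖ := by
        simpa [hK, Metric.mem_closedBall, dist_eq_norm] using hP
      have h1 : f 0 < f P := by
        have h2 : ‖P‖ - ‖A 0‖ ≤ ‖P - A 0‖ := norm_sub_norm_le _ _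
        have h3 : ‖P - A 0‖ ≤ f P := by
          rw [hf]
          exact Finset.single_le_sum (f := fun i => ‖P - A i‖)
            (fun i _ => norm_nonneg _) (Finset.mem_univ 0)
        have h4 : ‖A 0‖ ≤ S := Finset.single_le_sum (f := fun i => ‖A i‖)
          (fun i _ => norm_nonneg _) (Finset.mem_univ 0)
        linarith
      exact (hmin h0K).trans h1.le
  refine ⟨P₀, hglob, ?_⟩
  intro Q hQ
  by_contra hne
  have hval : f Q = f P₀ := le_antisymm (hQ P₀) (hglob Q)
  set M := (2⁻¹ : ℝ) • (Q + P₀) with hM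
  have hMi : ∀ i : Fin 4, M - A i = (2⁻¹ : ℝ) • ((Q - A i) + (P₀ - A i)) := by
    intro i
    rw [hM]
    module
  have hle : ∀ i : Fin 4, ‖M - A i‖ ≤ 2⁻¹ * (‖Q - A i‖ + ‖P₀ - A i‖) := by
    intro i
    rw [hMi i, norm_smul]
    have h := norm_add_le (Q - A i) (P₀ - A i)
    have : ‖(2⁻¹ : ℝ)‖ = 2⁻¹ := by norm_num
    rw [this]
    nlinarith
  have hsum : ∑ i : Fin 4, (2⁻¹ * (‖Q - A i‖ + ‖P₀ - A i‖)) ≤ ∑ i : Fin 4, ‖M - A i‖ := by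
    have hrw : ∑ i : Fin 4, (2⁻¹ * (‖Q - A i‖ + ‖P₀ - A i‖)) = 2⁻¹ * (f Q + f P₀) := by
      rw [hf, hf, ← Finset.sum_add_distrib, Finset.mul_sum]
    rw [hrw, hval]
    have h := hglob M
    rw [hf M] at h
    linarith
  have heq : ∀ i : Fin 4, ‖M - A i‖ = 2⁻¹ * (‖Q - A i‖ + ‖P₀ - A i‖) := by
    intro i
    by_contra hne'
    have hlt : ‖M - A i‖ < 2⁻¹ * (‖Q - A i‖ + ‖P₀ - A i‖) := lt_of_le_of_ne (hle i) hne'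
    have : ∑ i : Fin 4, ‖M - A i‖ < ∑ i : Fin 4, (2⁻¹ * (‖Q - A i‖ + ‖P₀ - A i‖)) :=
      Finset.sum_lt_sum (fun j _ => hle j) ⟨i, Finset.mem_univ i, hlt⟩
    linarith
  have hray : ∀ i : Fin 4, SameRay ℝ (Q - A i) (P₀ - A i) := by
    intro i
    rw [sameRay_iff_norm_add]
    have h1 := heq i
    rw [hMi i, norm_smul] at h1
    have h2 : ‖(2⁻¹ : ℝ)‖ = 2⁻¹ := by norm_num
    rw [h2] at h1
    linarith
  apply hA
  rw [collinear_iff_exists_forall_eq_smul_vadd]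
  refine ⟨Q, P₀ - Q, ?_⟩
  rintro p ⟨i, rfl⟩
  rcases hray i with h0 | h0 | ⟨r₁, r₂, hr₁, hr₂, hr⟩
  · refine ⟨0, ?_⟩
    have hq : A i = Q := (sub_eq_zero.mp h0).symm
    rw [hq, vadd_eq_add, zero_smul, zero_add]
  · refine ⟨1, ?_⟩
    have hq : A i = P₀ := (sub_eq_zero.mp h0).symm
    rw [hq, vadd_eq_add, one_smul]
    abel
  · have hd : r₂ - r₁ ≠ 0 := by
      intro h
      have hr12 : r₁ = r₂ := by linarith [sub_eq_zero.mp h]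
      rw [hr12] at hr
      have := smul_right_injective (EuclideanSpace ℝ (Fin 3)) (ne_of_gt hr₂) hr
      exact hne (by have := sub_left_injective this; exact this) |>.elim
    refine ⟨r₂ / (r₂ - r₁), ?_⟩
    rw [vadd_eq_add]
    apply smul_right_injective (EuclideanSpace ℝ (Fin 3)) hd
    show (r₂ - r₁) • A i = (r₂ - r₁) • ((r₂ / (r₂ - r₁)) • (P₀ - Q) + Q)
    have h2 : r₁ • Q - r₁ • A i = r₂ • P₀ - r₂ • A i := by
      rw [← smul_sub, ← smul_sub]; exact hr
    have key : (r₂ - r₁) • A i = r₂ • P₀ - r₁ • Q := by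
      rw [sub_smul]
      calc r₂ • A i - r₁ • A i
          = (r₁ • Q - r₁ • A i) - (r₂ • P₀ - r₂ • A i) + r₂ • P₀ - r₁ • Q := by abel
        _ = r₂ • P₀ - r₁ • Q := by rw [h2]; abel
    rw [key, smul_add, smul_smul, mul_div_cancel₀ _ hd, smul_sub, sub_smul]
    abel
end

section
/- At the point A_0 = (1/6, 1/6, 1/6), the cosine of the angle ∠A_iA_0A_j equals -1/3 for every pair of distinct vertices A_i, A_j of the tetrahedron {(0,0,0), (1,0,0), (0,1,0), (0,0,1)}. -/
open RealInnerProductSpace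

/-! With `uᵢ = Aᵢ - A₀` one has `‖u₀‖² = 1/12`, `‖uₖ‖² = 3/4`, `⟪u₀, uₖ⟫ = -1/12` and
`⟪uₖ, uₗ⟫ = -1/4` for `k ≠ l` among `1, 2, 3`. So every off-diagonal inner product is negative
and its square is one ninth of the product of the squared norms, which pins the cosine at `-1/3`. -/

theorem real_inner_div_norm_mul_norm_eq_neg_of_sq_eq {E : Type*} [NormedAddCommGroup E]
    [InnerProductSpace ℝ E] {x y : E} {r : ℝ} (hr : 0 ≤ r) (hneg : ⟪x, y⟫ < 0)
    (hsq : ⟪x, y⟫ ^ 2 = r ^ 2 * (⟪x, x⟫ * ⟪y, y⟫)) :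
    ⟪x, y⟫ / (‖x‖ * ‖y‖) = -r := by
  have hprod : ‖x‖ * ‖y‖ * r = -⟪x, y⟫ := by
    rw [real_inner_self_eq_norm_sq, real_inner_self_eq_norm_sq] at hsq
    refine (pow_left_inj₀ (by positivity) (by linarith) two_ne_zero).1 ?_
    rw [neg_sq, hsq]
    ring
  have hne : ‖x‖ * ‖y‖ ≠ 0 := by
    rintro h
    rw [h, zero_mul] at hprod
    linarith
  rw [div_eq_iff hne]
  linarith

/-- At A₀ = (1/6,1/6,1/6), the cosine of every angle ∠AᵢA₀Aⱼ, for distinct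
vertices of the tetrahedron {0, e₁, e₂, e₃}, equals -1/3. -/
theorem stmt_8 (V : Fin 4 → EuclideanSpace ℝ (Fin 3))
    (A₀ : EuclideanSpace ℝ (Fin 3))
    (hV0 : V 0 = (WithLp.equiv 2 (Fin 3 → ℝ)).symm ![0, 0, 0])
    (hV1 : V 1 = (WithLp.equiv 2 (Fin 3 → ℝ)).symm ![1, 0, 0])
    (hV2 : V 2 = (WithLp.equiv 2 (Fin 3 → ℝ)).symm ![0, 1, 0])
    (hV3 : V 3 = (WithLp.equiv 2 (Fin 3 → ℝ)).symm ![0, 0, 1])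
    (hA₀ : A₀ = (WithLp.equiv 2 (Fin 3 → ℝ)).symm ![1/6, 1/6, 1/6]) :
    ∀ i j : Fin 4, i ≠ j →
      ⟪V i - A₀, V j - A₀⟫ / (‖V i - A₀‖ * ‖V j - A₀‖) = -1/3 := by
  intro i j hij
  have hcases : ∀ k : Fin 4, k = 0 ∨ k = 1 ∨ k = 2 ∨ k = 3 := by decide
  rw [neg_div]
  refine real_inner_div_norm_mul_norm_eq_neg_of_sq_eq (by norm_num) ?_ ?_ <;>
  · rcases hcases i with rfl | rfl | rfl | rfl <;> rcases hcases j with rfl | rfl | rfl | rfl <;>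
      first
      | exact absurd rfl hij
      | simp only [PiLp.inner_apply, Fin.sum_univ_three, PiLp.sub_apply, hV0, hV1, hV2, hV3, hA₀,
          WithLp.equiv_symm_apply, Matrix.cons_val, RCLike.inner_apply, conj_trivial]
        norm_num
end

section
/- Let A_1, A_2, A_3, A_4 lie on a sphere of radius R centered at O with |A_1A_2| = |A_3A_4|, |A_1A_3| = |A_2A_4|, |A_1A_4| = |A_2A_3| (an isosceles tetrahedron inscribed in its circumsphere with center equidistant). Then the sum of the four unit vectors from O toward the A_i is zero; hence O is the Fermat–Torricelli point of A_1A_2A_3A_4. -/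
/-!
Put `vᵢ = Aᵢ - O`, so `‖vᵢ‖ = R`. By polarization, equal opposite edges give equal inner
products `⟪v₀, v₁⟫ = ⟪v₂, v₃⟫` etc., so the sum `s = ∑ vⱼ` has the same inner product with every
`vᵢ`. Hence `s` is orthogonal to every edge `vᵢ - vⱼ`, and since the edges span space (the
tetrahedron is not flat), `s = 0`; dividing by `R` gives the unit-vector identity.

That identity is the optimality condition: with `uᵢ` the unit vector toward `Aᵢ`,
`dist P Aᵢ ≥ ⟪uᵢ, Aᵢ - P⟫ = dist O Aᵢ + ⟪uᵢ, O - P⟫` by Cauchy–Schwarz, and summing over `i`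
kills the last term.
-/

open scoped RealInnerProductSpace

section

variable {V : Type*} [NormedAddCommGroup V] [InnerProductSpace ℝ V]

lemma real_inner_eq_of_norm_sub_eq {R : ℝ} {x y z w : V} (hx : ‖x‖ = R) (hy : ‖y‖ = R)
    (hz : ‖z‖ = R) (hw : ‖w‖ = R) (h : ‖x - y‖ = ‖z - w‖) : ⟪x, y⟫ = ⟪z, w⟫ := by
  have h2 := congrArg (· ^ 2) h
  simp only [norm_sub_sq_real, hx, hy, hz, hw] at h2
  linarith

/-- Both sides equal `R² + ⟪v 0, v 1⟫ + ⟪v 0, v 2⟫ + ⟪v 0, v 3⟫`: the three edges at each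
vertex are, up to order, the three pairs of opposite edges. -/
lemma inner_sum_eq_of_opposite_edges {R : ℝ} {v : Fin 4 → V} (hv : ∀ i, ‖v i‖ = R)
    (h01 : ‖v 0 - v 1‖ = ‖v 2 - v 3‖) (h02 : ‖v 0 - v 2‖ = ‖v 1 - v 3‖)
    (h03 : ‖v 0 - v 3‖ = ‖v 1 - v 2‖) (i : Fin 4) :
    ⟪∑ j, v j, v i⟫ = ⟪∑ j, v j, v 0⟫ := by
  have ha := real_inner_eq_of_norm_sub_eq (hv 0) (hv 1) (hv 2) (hv 3) h01
  have hb := real_inner_eq_of_norm_sub_eq (hv 0) (hv 2) (hv 1) (hv 3) h02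
  have hc := real_inner_eq_of_norm_sub_eq (hv 0) (hv 3) (hv 1) (hv 2) h03
  have hself : ∀ j, ⟪v j, v j⟫ = R ^ 2 := fun j => by rw [real_inner_self_eq_norm_sq, hv]
  simp only [Fin.sum_univ_four, inner_add_left]
  fin_cases i <;> simp only [Fin.zero_eta, Fin.mk_one, Fin.reduceFinMk, hself] <;>
    linarith [real_inner_comm (v 0) (v 1), real_inner_comm (v 0) (v 2),
      real_inner_comm (v 0) (v 3), real_inner_comm (v 1) (v 2), real_inner_comm (v 1) (v 3),
      real_inner_comm (v 2) (v 3)]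

lemma eq_zero_of_inner_sub_const {ι : Type*} {p : ι → V} {O s : V} {c : ℝ}
    (hp : vectorSpan ℝ (Set.range p) = ⊤) (h : ∀ i, ⟪s, p i - O⟫ = c) : s = 0 := by
  have hle : vectorSpan ℝ (Set.range p) ≤ (ℝ ∙ s)ᗮ := by
    rw [vectorSpan_def, Submodule.span_le]
    rintro _ ⟨_, ⟨i, rfl⟩, _, ⟨j, rfl⟩, rfl⟩
    rw [SetLike.mem_coe, Submodule.mem_orthogonal_singleton_iff_inner_right]
    change ⟪s, p i - p j⟫ = 0
    rw [← sub_sub_sub_cancel_right (p i) (p j) O, inner_sub_right, h, h, sub_self]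
  have hs : s ∈ (ℝ ∙ s)ᗮ := hle (hp ▸ Submodule.mem_top)
  rw [Submodule.mem_orthogonal_singleton_iff_inner_right] at hs
  exact inner_self_eq_zero.mp hs

lemma vectorSpan_eq_top_of_not_coplanar (hV : Module.finrank ℝ V = 3) {s : Set V}
    (hs : ¬ Coplanar ℝ s) : vectorSpan ℝ s = ⊤ := by
  by_contra h
  have : FiniteDimensional ℝ V := Module.finite_of_finrank_eq_succ hV
  have := Submodule.finrank_lt h
  exact hs ((coplanar_iff_finrank_le_two).2 (by omega))

lemma norm_sub_add_inner_le_dist (p O P : V) :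
    ‖p - O‖ + ⟪‖p - O‖⁻¹ • (p - O), O - P⟫ ≤ dist P p := by
  rcases eq_or_ne p O with rfl | hpO
  · simp
  have hu : ‖‖p - O‖⁻¹ • (p - O)‖ = 1 := norm_smul_inv_norm (sub_ne_zero.2 hpO)
  have hpp : ⟪‖p - O‖⁻¹ • (p - O), p - O⟫ = ‖p - O‖ := by
    rw [real_inner_smul_left, real_inner_self_eq_norm_sq]
    field_simp [norm_ne_zero_iff.2 (sub_ne_zero.2 hpO)]
  calc ‖p - O‖ + ⟪‖p - O‖⁻¹ • (p - O), O - P⟫ = ⟪‖p - O‖⁻¹ • (p - O), p - P⟫ := by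
        rw [← sub_add_sub_cancel p O P, inner_add_right, hpp]
    _ ≤ ‖‖p - O‖⁻¹ • (p - O)‖ * ‖p - P‖ := real_inner_le_norm _ _
    _ = dist P p := by rw [hu, one_mul, dist_comm, dist_eq_norm]

lemma sum_dist_le_of_sum_unit_vectors_eq_zero {ι : Type*} [Fintype ι] {p : ι → V} {O : V}
    (h : ∑ i, ‖p i - O‖⁻¹ • (p i - O) = 0) (P : V) :
    ∑ i, dist O (p i) ≤ ∑ i, dist P (p i) := by
  calc ∑ i, dist O (p i)
      = ∑ i, (‖p i - O‖ + ⟪‖p i - O‖⁻¹ • (p i - O), O - P⟫) := by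
        simp only [Finset.sum_add_distrib, ← sum_inner, h, inner_zero_left, add_zero,
          dist_comm O, dist_eq_norm]
    _ ≤ ∑ i, dist P (p i) := Finset.sum_le_sum fun i _ => norm_sub_add_inner_le_dist _ _ _

end

theorem stmt_14_general (A : Fin 4 → EuclideanSpace ℝ (Fin 3))
    (O : EuclideanSpace ℝ (Fin 3)) (R : ℝ)
    (hsphere : ∀ i, dist O (A i) = R)
    (hncop : ¬ Coplanar ℝ (Set.range A))
    (h12 : dist (A 0) (A 1) = dist (A 2) (A 3))
    (h13 : dist (A 0) (A 2) = dist (A 1) (A 3))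
    (h14 : dist (A 0) (A 3) = dist (A 1) (A 2)) :
    (∑ i : Fin 4, ‖A i - O‖⁻¹ • (A i - O)) = 0 ∧
    ∀ P : EuclideanSpace ℝ (Fin 3),
      ∑ i : Fin 4, dist O (A i) ≤ ∑ i : Fin 4, dist P (A i) := by
  have hnorm : ∀ i, ‖A i - O‖ = R := fun i => by rw [← dist_eq_norm, dist_comm, hsphere]
  have hedge : ∀ i j, ‖(A i - O) - (A j - O)‖ = dist (A i) (A j) := fun i j => by
    rw [sub_sub_sub_cancel_right, dist_eq_norm]
  have hinner := inner_sum_eq_of_opposite_edges (v := fun i => A i - O) hnorm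
    (by simpa only [hedge] using h12) (by simpa only [hedge] using h13)
    (by simpa only [hedge] using h14)
  have hsum : ∑ i, (A i - O) = 0 :=
    eq_zero_of_inner_sub_const (vectorSpan_eq_top_of_not_coplanar finrank_euclideanSpace_fin hncop)
      hinner
  have hunit : ∑ i, ‖A i - O‖⁻¹ • (A i - O) = 0 := by
    simp only [hnorm, ← Finset.smul_sum, hsum, smul_zero]
  exact ⟨hunit, sum_dist_le_of_sum_unit_vectors_eq_zero hunit⟩

/-- An isosceles tetrahedron inscribed in a sphere of center O: if the four
vertices are at distance R from O, are not coplanar, and opposite edges are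
pairwise equal, then the four unit vectors from O toward the vertices sum to
zero; hence O minimizes the sum of distances to the vertices (O is the
Fermat–Torricelli point). -/
theorem stmt_14 (A : Fin 4 → EuclideanSpace ℝ (Fin 3))
    (O : EuclideanSpace ℝ (Fin 3)) (R : ℝ) (hR : 0 < R)
    (hsphere : ∀ i, dist O (A i) = R)
    (hncop : ¬ Coplanar ℝ (Set.range A))
    (h12 : dist (A 0) (A 1) = dist (A 2) (A 3))
    (h13 : dist (A 0) (A 2) = dist (A 1) (A 3))
    (h14 : dist (A 0) (A 3) = dist (A 1) (A 2)) :
    (∑ i : Fin 4, ‖A i - O‖⁻¹ • (A i - O)) = 0 ∧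
    ∀ P : EuclideanSpace ℝ (Fin 3),
      ∑ i : Fin 4, dist O (A i) ≤ ∑ i : Fin 4, dist P (A i) :=
  stmt_14_general A O R hsphere hncop h12 h13 h14
end
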